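/- arXiv:1211.6137 — 6 statements merged into one kernel-verified Lean document; each statement's English description precedes it below -/
import Mathlib

section
/- Let G be a finite group with property B and let N be a normal subgroup of G. Then the quotient group G/N also has property B. -/
/-- A subset `X` of a group `G` is a minimal generating set if it generates `G`
and no proper subset of `X` generates `G`. -/
def IsMinimalGenSet {G : Type*} [Group G] (X : Set G) : Prop :=
  Subgroup.closure X = ⊤ ∧ ∀ Y : Set G, Y ⊂ X → Subgroup.closure Y ≠ ⊤

/-- A group has property `B` if all its minimal generating sets have the same size. -/
def HasPropB (G : Type*) [Group G] : Prop :=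
  ∀ X Y : Set G, IsMinimalGenSet X → IsMinimalGenSet Y → X.ncard = Y.ncard

/-- `dGen G` is the smallest size of a minimal generating set of `G`. -/
noncomputable def dGen (G : Type*) [Group G] : ℕ :=
  sInf {n | ∃ X : Set G, IsMinimalGenSet X ∧ X.ncard = n}

/-- `mGen G` is the largest size of a minimal generating set of `G`. -/
noncomputable def mGen (G : Type*) [Group G] : ℕ :=
  sSup {n | ∃ X : Set G, IsMinimalGenSet X ∧ X.ncard = n}

/-! A minimal generating set of `G ⧸ N` lifts to a minimal generating set of `G` of size larger by
a constant. Fix a subgroup `H` minimal among those mapping onto `G ⧸ N`, and a set `S ⊆ N` minimal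
with `H ⊔ ⟨S⟩ = G`. Any lift `X'` of a minimal generating set `X` of `G ⧸ N` inside `H` generates
`H` by minimality of `H`, and then `X' ∪ S` is a minimal generating set of `G` of size
`|X| + |S|`. Property B of `G` thus forces all `|X|` to be equal. -/

open Subgroup

section MinimalGenSet

variable {G : Type*} [Group G] {X : Set G}

theorem isMinimalGenSet_iff_minimal :
    IsMinimalGenSet X ↔ Minimal (fun Y : Set G => closure Y = ⊤) X := by
  rw [minimal_iff_forall_lt]
  rfl

theorem isMinimalGenSet_iff_forall_sdiff_singleton :
    IsMinimalGenSet X ↔ closure X = ⊤ ∧ ∀ x ∈ X, closure (X \ {x}) ≠ ⊤ :=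
  isMinimalGenSet_iff_minimal.trans <| Set.minimal_iff_forall_sdiff_singleton
    fun _ _ ht hts => top_unique (ht.ge.trans (closure_mono hts))

theorem IsMinimalGenSet.one_notMem (hX : IsMinimalGenSet X) : (1 : G) ∉ X :=
  (isMinimalGenSet_iff_minimal.mp hX).notMem_of_prop_sdiff_singleton
    ((closure_sdiff_one X).trans hX.1)

end MinimalGenSet

namespace MonoidHom

variable {G Q : Type*} [Group G] [Group Q] {f : G →* Q}

theorem sup_ker_eq_top_of_map_eq_top {H : Subgroup G} (hH : H.map f = ⊤) : H ⊔ f.ker = ⊤ := by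
  rw [← comap_map_eq, hH, comap_top]

theorem closure_image_eq_top_of_Subgroup.closure_union_eq_top (hf : Function.Surjective f)
    {A S : Set G} (hS : S ⊆ f.ker) (h : closure (A ∪ S) = ⊤) : closure (f '' A) = ⊤ := by
  have hle : closure (A ∪ S) ≤ (closure (f '' A)).comap f :=
    closure_le _ |>.mpr <| Set.union_subset
      ((Set.subset_preimage_image f A).trans (Set.preimage_mono Subgroup.subset_closure))
      (hS.trans (f.ker_le_comap _))
  rw [h, top_le_iff] at hle
  rw [← map_comap_eq_self_of_surjective hf (closure (f '' A)), hle, map_top_of_surjective f hf]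

variable {H : Subgroup G} {S : Set G}
  (hH : Minimal (fun K : Subgroup G => K.map f = ⊤) H)
  (hS : Minimal (fun T : Set G => T ⊆ f.ker ∧ H ⊔ closure T = ⊤) S)
include hH

theorem closure_eq_of_minimal_map_eq_top {X' : Set G} (hX'H : X' ⊆ H)
    (hgen : closure (f '' X') = ⊤) : closure X' = H :=
  hH.eq_of_le (by rwa [map_closure]) (closure_le _ |>.mpr hX'H)

include hS

theorem isMinimalGenSet_union_of_minimal {X' : Set G} (hX'H : X' ⊆ H) (hinj : X'.InjOn f)
    (hX' : IsMinimalGenSet (f '' X')) : IsMinimalGenSet (X' ∪ S) := by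
  have hf : Function.Surjective f :=
    range_eq_top.mp (top_unique (hH.prop.ge.trans (map_le_range f H)))
  have hclX' := closure_eq_of_minimal_map_eq_top hH hX'H hX'.1
  rw [isMinimalGenSet_iff_forall_sdiff_singleton] at hX' ⊢
  refine ⟨by rw [Subgroup.closure_union, hclX', hS.prop.2], fun w hw hgen => ?_⟩
  rcases hw with hwX' | hwS
  · have hsub : (X' ∪ S) \ {w} ⊆ (X' \ {w}) ∪ S := by
      rintro z ⟨hz | hz, hzw⟩
      exacts [Or.inl ⟨hz, hzw⟩, Or.inr hz]
    have himg := closure_image_eq_top_of_Subgroup.closure_union_eq_top hf hS.prop.1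
      (top_unique (hgen.ge.trans (closure_mono hsub)))
    rw [hinj.image_sdiff_subset (Set.singleton_subset_iff.mpr hwX'), Set.image_singleton] at himg
    exact hX'.2 (f w) (Set.mem_image_of_mem f hwX') himg
  · have hsub : (X' ∪ S) \ {w} ⊆ X' ∪ (S \ {w}) := by
      rintro z ⟨hz | hz, hzw⟩
      exacts [Or.inl hz, Or.inr ⟨hz, hzw⟩]
    have hsup : H ⊔ closure (S \ {w}) = ⊤ := by
      rw [← hclX', ← Subgroup.closure_union]
      exact top_unique (hgen.ge.trans (closure_mono hsub))
    exact hS.notMem_of_prop_sdiff_singleton ⟨Set.sdiff_subset.trans hS.prop.1, hsup⟩ hwS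

theorem exists_isMinimalGenSet_ncard_eq_add [Finite G] {X : Set Q} (hX : IsMinimalGenSet X) :
    ∃ W : Set G, IsMinimalGenSet W ∧ W.ncard = X.ncard + S.ncard := by
  have hXH : Set.SurjOn f H X := by
    rw [Set.SurjOn, ← coe_map, hH.prop, coe_top]
    exact Set.subset_univ X
  obtain ⟨X', hX'H, hinj, rfl⟩ := hXH.exists_subset_injOn_image_eq
  have hdisj : Disjoint X' S := Set.disjoint_left.mpr fun x hxX' hxS =>
    hX.one_notMem (hS.prop.1 hxS ▸ Set.mem_image_of_mem f hxX')
  exact ⟨X' ∪ S, isMinimalGenSet_union_of_minimal hH hS hX'H hinj hX,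
    by rw [Set.ncard_union_eq hdisj, hinj.ncard_image]⟩

end MonoidHom

theorem HasPropB.of_surjective {G Q : Type*} [Group G] [Group Q] [Finite G] (hG : HasPropB G)
    {f : G →* Q} (hf : Function.Surjective f) : HasPropB Q := by
  obtain ⟨H, hH⟩ := exists_minimal_of_wellFoundedLT (fun K : Subgroup G => K.map f = ⊤)
    ⟨⊤, map_top_of_surjective f hf⟩
  obtain ⟨S, hS⟩ := exists_minimal_of_wellFoundedLT
    (fun T : Set G => T ⊆ f.ker ∧ H ⊔ closure T = ⊤)
    ⟨f.ker, subset_rfl, by rw [closure_eq, MonoidHom.sup_ker_eq_top_of_map_eq_top hH.prop]⟩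
  intro X Y hX hY
  obtain ⟨WX, hWX, hWXcard⟩ := MonoidHom.exists_isMinimalGenSet_ncard_eq_add hH hS hX
  obtain ⟨WY, hWY, hWYcard⟩ := MonoidHom.exists_isMinimalGenSet_ncard_eq_add hH hS hY
  have := hG WX WY hWX hWY
  omega

theorem quotient_of_B_group_is_B_group (G : Type*) [Group G] [Finite G]
    (hG : HasPropB G) (N : Subgroup G) [N.Normal] :
    HasPropB (G ⧸ N) :=
  hG.of_surjective (QuotientGroup.mk'_surjective N)
end

section
/- Let G be a finite cyclic group. Then m(G), the largest size of a minimal generating set of G, equals the number of distinct prime divisors of the order of G. -/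
section SeparatingFamily

variable {G ι : Type*} [Group G] {s : Finset ι} {M : ι → Subgroup G}

lemma IsMinimalGenSet.closure_diff_singleton_ne_top {X : Set G} (hX : IsMinimalGenSet X)
    {x : G} (hx : x ∈ X) : Subgroup.closure (X \ {x}) ≠ ⊤ :=
  hX.2 _ (Set.sdiff_singleton_ssubset.mpr hx)

lemma IsMinimalGenSet.ncard_le_card (hM : ∀ i ∈ s, M i ≠ ⊤)
    (hcover : ∀ K : Subgroup G, K ≠ ⊤ → ∃ i ∈ s, K ≤ M i) {X : Set G}
    (hX : IsMinimalGenSet X) : X.ncard ≤ s.card := by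
  have hmem : ∀ x ∈ X, ∃ i ∈ s, Subgroup.closure (X \ {x}) ≤ M i :=
    fun x hx => hcover _ (hX.closure_diff_singleton_ne_top hx)
  obtain rfl | ⟨x₀, hx₀⟩ := X.eq_empty_or_nonempty
  · simp
  have : Nonempty ι := ⟨(hmem x₀ hx₀).choose⟩
  choose! f hfs hf using hmem
  rw [← Set.ncard_coe_finset]
  refine Set.ncard_le_ncard_of_injOn f hfs (fun a ha b hb hab => ?_)
  by_contra hne
  have hXM : X ⊆ M (f a) := fun z hz => by
    by_cases hza : z = a
    · subst hza
      exact hab ▸ hf b hb (Subgroup.subset_closure ⟨hz, hne⟩)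
    · exact hf a ha (Subgroup.subset_closure ⟨hz, hza⟩)
  exact hM _ (hfs a ha) (top_le_iff.mp (hX.1 ▸ (Subgroup.closure_le _).mpr hXM))

variable {x : ι → G}

lemma isMinimalGenSet_image (hcover : ∀ K : Subgroup G, K ≠ ⊤ → ∃ i ∈ s, K ≤ M i)
    (hx : ∀ i ∈ s, ∀ j ∈ s, x i ∈ M j ↔ i ≠ j) : IsMinimalGenSet (x '' s) := by
  refine ⟨?_, fun Y hY hYtop => ?_⟩
  · by_contra hne
    obtain ⟨i, hi, hle⟩ := hcover _ hne
    exact (hx i hi i hi).mp (hle (Subgroup.subset_closure ⟨i, hi, rfl⟩)) rfl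
  · obtain ⟨_, ⟨i, hi, rfl⟩, hiY⟩ := Set.exists_of_ssubset hY
    have hYM : Y ⊆ M i := by
      rintro _ hy
      obtain ⟨j, hj, rfl⟩ := hY.1 hy
      exact (hx j hj i hi).mpr (by rintro rfl; exact hiY hy)
    have hle := (Subgroup.closure_le _).mpr hYM
    rw [hYtop] at hle
    exact (hx i hi i hi).mp (hle (Subgroup.mem_top _)) rfl

lemma injOn_of_mem_iff_ne (hx : ∀ i ∈ s, ∀ j ∈ s, x i ∈ M j ↔ i ≠ j) : Set.InjOn x s :=
  fun i hi j hj hij => not_not.mp fun hne => (hx j hj j hj).mp (hij ▸ (hx i hi j hj).mpr hne) rfl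

lemma mGen_eq_card (hcover : ∀ K : Subgroup G, K ≠ ⊤ → ∃ i ∈ s, K ≤ M i)
    (hx : ∀ i ∈ s, ∀ j ∈ s, x i ∈ M j ↔ i ≠ j) : mGen G = s.card := by
  refine IsGreatest.csSup_eq ⟨⟨x '' s, isMinimalGenSet_image hcover hx, ?_⟩, ?_⟩
  · rw [(injOn_of_mem_iff_ne hx).ncard_image, Set.ncard_coe_finset]
  · rintro _ ⟨X, hX, rfl⟩
    refine hX.ncard_le_card (fun i hi htop => ?_) hcover
    exact (hx i hi i hi).mp (htop ▸ Subgroup.mem_top _) rfl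

end SeparatingFamily

lemma Nat.ordProj_dvd_div_iff {n p q : ℕ} (hp : p ∈ n.primeFactors) (hq : q ∈ n.primeFactors) :
    ordProj[p] n ∣ n / q ↔ p ≠ q := by
  obtain ⟨hp, -, hn⟩ := Nat.mem_primeFactors.mp hp
  obtain ⟨hq, hqn, -⟩ := Nat.mem_primeFactors.mp hq
  rw [Nat.dvd_div_iff_mul_dvd hqn]
  constructor
  · rintro h rfl
    exact Nat.pow_succ_factorization_not_dvd hn hp (by rwa [pow_succ, mul_comm])
  · intro hne
    have hcop : q.Coprime (ordProj[p] n) :=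
      Nat.Coprime.pow_right _ ((Nat.coprime_primes hq hp).mpr hne.symm)
    exact hcop.mul_dvd_of_dvd_of_dvd hqn (Nat.ordProj_dvd n p)

section FiniteCommGroup

variable {G : Type*} [CommGroup G] [Finite G]

lemma Subgroup.exists_prime_le_ker_powMonoidHom {K : Subgroup G} (hK : K ≠ ⊤) :
    ∃ p ∈ (Nat.card G).primeFactors, K ≤ (powMonoidHom (Nat.card G / p)).ker := by
  have hKn : Nat.card K ∣ Nat.card G := K.card_subgroup_dvd_card
  obtain ⟨p, hp, hpK⟩ := Nat.exists_prime_and_dvd (n := Nat.card G / Nat.card K)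
    fun h => hK (K.eq_top_of_card_eq (Nat.eq_of_dvd_of_div_eq_one hKn h))
  have hpn : p ∣ Nat.card G := hpK.trans (Nat.div_dvd_of_dvd hKn)
  have hKp : Nat.card K ∣ Nat.card G / p := by
    rw [Nat.dvd_div_iff_mul_dvd hpn, mul_comm, ← Nat.dvd_div_iff_mul_dvd hKn]
    exact hpK
  refine ⟨p, Nat.mem_primeFactors.mpr ⟨hp, hpn, Nat.card_pos.ne'⟩, fun x hx => ?_⟩
  rw [MonoidHom.mem_ker, powMonoidHom_apply, ← orderOf_dvd_iff_pow_eq_one]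
  exact (K.orderOf_dvd_natCard hx).trans hKp

lemma pow_div_ordProj_mem_ker_powMonoidHom_iff {g : G} (hg : orderOf g = Nat.card G) {p q : ℕ}
    (hp : p ∈ (Nat.card G).primeFactors) (hq : q ∈ (Nat.card G).primeFactors) :
    g ^ (Nat.card G / ordProj[p] (Nat.card G)) ∈ (powMonoidHom (Nat.card G / q)).ker ↔
      p ≠ q := by
  rw [MonoidHom.mem_ker, powMonoidHom_apply, ← orderOf_dvd_iff_pow_eq_one,
    orderOf_pow_of_dvd (Nat.ordCompl_pos p Nat.card_pos.ne').ne' (hg ▸ Nat.ordCompl_dvd _ p), hg,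
    Nat.div_div_self (Nat.ordProj_dvd _ p) Nat.card_pos.ne']
  exact Nat.ordProj_dvd_div_iff hp hq

end FiniteCommGroup

theorem mGen_cyclic_eq_card_primeFactors (G : Type*) [Group G] [Finite G]
    (hG : IsCyclic G) :
    mGen G = (Nat.card G).primeFactors.card := by
  let := hG.commGroup
  obtain ⟨g, hg⟩ := IsCyclic.exists_ofOrder_eq_natCard (α := G)
  exact mGen_eq_card (fun _ hK => Subgroup.exists_prime_le_ker_powMonoidHom hK)
    (fun _ hp _ hq => pow_div_ordProj_mem_ker_powMonoidHom_iff hg hp hq)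
end

section
/- For every finite group G, one has d(G) = d(G/Φ(G)) and m(G) = m(G/Φ(G)), where Φ(G) is the Frattini subgroup of G. -/
/-!
Let `f : G → H` be surjective with kernel inside `Φ(G)`. Since `Φ(G)` consists of non-generators,
a set `X ⊆ G` generates `G` exactly when `f '' X` generates `H`. Hence a minimal generating set `X`
of `G` meets each fibre of `f` at most once (two points of `X` in one fibre would make one of them
redundant), so `f` maps it bijectively onto a minimal generating set of `H`; conversely, any
section of `f` lifts minimal generating sets of `H` to ones of `G` of the same size. Thus `G` and
`H` have the same set of sizes of minimal generating sets.
-/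

open Subgroup

def minGenSetSizes (G : Type*) [Group G] : Set ℕ :=
  {n | ∃ X : Set G, IsMinimalGenSet X ∧ X.ncard = n}

section FrattiniKernel

variable {G H : Type*} [Group G] [Group H] [IsCoatomic (Subgroup G)] {f : G →* H}

theorem Subgroup.eq_top_of_map_eq_top_of_ker_le_frattini (hker : f.ker ≤ frattini G)
    {K : Subgroup G} (hK : K.map f = ⊤) : K = ⊤ :=
  frattini_nongenerating <| top_le_iff.mp <| calc
    ⊤ = (K.map f).comap f := by rw [hK, comap_top]
    _ = K ⊔ f.ker := comap_map_eq f K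
    _ ≤ K ⊔ frattini G := sup_le_sup_left hker K

theorem Subgroup.closure_image_eq_top_iff_of_ker_le_frattini (hf : Function.Surjective f)
    (hker : f.ker ≤ frattini G) {X : Set G} : closure (f '' X) = ⊤ ↔ closure X = ⊤ := by
  rw [← MonoidHom.map_closure]
  exact ⟨eq_top_of_map_eq_top_of_ker_le_frattini hker,
    fun hX => hX ▸ map_top_of_surjective f hf⟩

theorem isMinimalGenSet_image_iff_of_ker_le_frattini (hf : Function.Surjective f)
    (hker : f.ker ≤ frattini G) {X : Set G} (hinj : X.InjOn f) :
    IsMinimalGenSet (f '' X) ↔ IsMinimalGenSet X := by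
  simp only [IsMinimalGenSet, closure_image_eq_top_iff_of_ker_le_frattini hf hker]
  refine and_congr_right fun _ => ⟨fun hmin Y hYX => ?_, fun hmin Yb hYbX => ?_⟩
  · exact mt (closure_image_eq_top_iff_of_ker_le_frattini hf hker).mpr
      (hmin _ ((hinj.image_ssubset_image_iff hYX.subset subset_rfl).mpr hYX))
  · have hYb : f '' (X ∩ f ⁻¹' Yb) = Yb := by
      rw [Set.image_inter_preimage, Set.inter_eq_right.mpr hYbX.subset]
    rw [← hYb] at hYbX ⊢
    exact mt (closure_image_eq_top_iff_of_ker_le_frattini hf hker).mp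
      (hmin _ ((hinj.image_ssubset_image_iff Set.inter_subset_left subset_rfl).mp hYbX))

theorem IsMinimalGenSet.injOn_of_ker_le_frattini (hf : Function.Surjective f)
    (hker : f.ker ≤ frattini G) {X : Set G} (hX : IsMinimalGenSet X) : X.InjOn f := by
  intro x hx y hy hxy
  by_contra hne
  have hfibre : f '' (X \ {y}) = f '' X := by
    refine (Set.image_mono Set.sdiff_subset).antisymm ?_
    rintro _ ⟨z, hz, rfl⟩
    by_cases hzy : z = y
    · exact ⟨x, ⟨hx, hne⟩, hzy ▸ hxy⟩
    · exact ⟨z, ⟨hz, hzy⟩, rfl⟩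
  refine hX.2 _ (Set.sdiff_singleton_ssubset.mpr hy) ?_
  rw [← closure_image_eq_top_iff_of_ker_le_frattini hf hker, hfibre,
    closure_image_eq_top_iff_of_ker_le_frattini hf hker]
  exact hX.1

theorem minGenSetSizes_eq_of_ker_le_frattini (hf : Function.Surjective f)
    (hker : f.ker ≤ frattini G) : minGenSetSizes H = minGenSetSizes G := by
  ext n
  constructor
  · rintro ⟨Xb, hXb, rfl⟩
    have hsection : f ∘ Function.surjInv hf = id := funext (Function.surjInv_eq hf)
    have himage : f '' (Function.surjInv hf '' Xb) = Xb := by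
      rw [Set.image_image, ← Function.comp_def, hsection, Set.image_id]
    have hinj : (Function.surjInv hf '' Xb).InjOn f := by
      rintro _ ⟨a, -, rfl⟩ _ ⟨b, -, rfl⟩ hab
      rw [Function.surjInv_eq hf, Function.surjInv_eq hf] at hab
      rw [hab]
    refine ⟨_, ?_, Set.ncard_image_of_injective _ (Function.injective_surjInv hf)⟩
    rwa [← isMinimalGenSet_image_iff_of_ker_le_frattini hf hker hinj, himage]
  · rintro ⟨X, hX, rfl⟩
    have hinj := hX.injOn_of_ker_le_frattini hf hker
    exact ⟨f '' X, (isMinimalGenSet_image_iff_of_ker_le_frattini hf hker hinj).mpr hX,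
      hinj.ncard_image⟩

end FrattiniKernel

theorem dGen_mGen_frattini_quotient (G : Type*) [Group G] [Finite G] :
    dGen G = dGen (G ⧸ frattini G) ∧ mGen G = mGen (G ⧸ frattini G) := by
  have hsizes : minGenSetSizes (G ⧸ frattini G) = minGenSetSizes G :=
    minGenSetSizes_eq_of_ker_le_frattini (QuotientGroup.mk'_surjective (frattini G))
      (QuotientGroup.ker_mk' (frattini G)).le
  exact ⟨congrArg sInf hsizes.symm, congrArg sSup hsizes.symm⟩
end

section
/- Let p be a prime, let Q be a finite abelian group, and let V be a finite-dimensional vector space over the field F_p with p elements, equipped with a linear action of Q (i.e., V is an F_p[Q]-module) such that the action of Q on V is faithful and V is a direct sum of pairwise isomorphic simple F_p[Q]-submodules. Then every non-trivial element of Q acts on V without non-zero fixed vectors. -/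
/-!
The fixed vectors of `g` form the submodule `torsionBy (g - 1)`. Over the commutative group
algebra every scalar commutes with every endomorphism, so this submodule is fully invariant; in a
semisimple isotypic module the only fully invariant submodules are `⊥` and `⊤`. Hence `g` either
has no non-zero fixed vector or acts trivially, and faithfulness excludes the latter for `g ≠ 1`.
-/

theorem Submodule.isFullyInvariant_torsionBy {R M : Type*} [CommRing R] [AddCommGroup M]
    [Module R M] (r : R) : (torsionBy R M r).IsFullyInvariant := fun f x hx => by
  rw [mem_torsionBy_iff] at hx
  rw [mem_comap, mem_torsionBy_iff, ← map_smul, hx, map_zero]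

theorem isIsotypic_of_iSup_eq_top {R M : Type*} [Ring R] [AddCommGroup M] [Module R M]
    {ι : Type*} {W : ι → Submodule R M} (hsimple : ∀ i, IsSimpleModule R (W i))
    (hW : ⨆ i, W i = ⊤) (hiso : ∀ i j, Nonempty (W i ≃ₗ[R] W j)) : IsIsotypic R M := by
  have hsimple' : ∀ m : Set.range W, IsSimpleModule R m := by
    rintro ⟨_, i, rfl⟩
    exact hsimple i
  have hsSup : sSup (Set.range W) = ⊤ := by rwa [sSup_range]
  intro m _ m' _
  obtain ⟨_, ⟨i, rfl⟩, ⟨e⟩⟩ := m.linearEquiv_of_sSup_eq_top _ (h := hsimple') hsSup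
  obtain ⟨_, ⟨j, rfl⟩, ⟨e'⟩⟩ := m'.linearEquiv_of_sSup_eq_top _ (h := hsimple') hsSup
  exact ⟨e'.trans ((hiso j i).some.trans e.symm)⟩

theorem IsIsotypic.torsionBy_eq_bot_or_eq_top {R M : Type*} [CommRing R] [AddCommGroup M]
    [Module R M] [IsSemisimpleModule R M] (h : IsIsotypic R M) (r : R) :
    Submodule.torsionBy R M r = ⊥ ∨ Submodule.torsionBy R M r = ⊤ :=
  isIsotypic_iff_isFullyInvariant_imp_bot_or_top.mp h _ (Submodule.isFullyInvariant_torsionBy r)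

theorem IsIsotypic.smul_eq_self_of_smul_eq_self {R M : Type*} [CommRing R] [AddCommGroup M]
    [Module R M] [IsSemisimpleModule R M] (h : IsIsotypic R M) {r : R} {v : M} (hv : v ≠ 0)
    (hrv : r • v = v) (x : M) : r • x = x := by
  have fixed_iff : ∀ y : M, y ∈ Submodule.torsionBy R M (r - 1) ↔ r • y = y := fun y => by
    rw [Submodule.mem_torsionBy_iff, sub_smul, one_smul, sub_eq_zero]
  rcases h.torsionBy_eq_bot_or_eq_top (r - 1) with hbot | htop
  · exact absurd ((Submodule.mem_bot R).mp (hbot ▸ (fixed_iff v).mpr hrv)) hv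
  · exact (fixed_iff x).mp (htop ▸ Submodule.mem_top)

theorem no_nonzero_fixed_vectors_of_faithful_isotypic_general (p : ℕ)
    (Q : Type*) [CommGroup Q]
    (V : Type*) [AddCommGroup V]
    [Module (MonoidAlgebra (ZMod p) Q) V]
    (hfaith : ∀ g : Q, (∀ v : V, MonoidAlgebra.of (ZMod p) Q g • v = v) → g = 1)
    (hiso : ∃ (ι : Type) (W : ι → Submodule (MonoidAlgebra (ZMod p) Q) V),
      (∀ i, IsSimpleModule (MonoidAlgebra (ZMod p) Q) (W i)) ∧
      iSupIndep W ∧ (⨆ i, W i) = ⊤ ∧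
      ∀ i j, Nonempty ((W i) ≃ₗ[MonoidAlgebra (ZMod p) Q] (W j))) :
    ∀ g : Q, g ≠ 1 → ∀ v : V, MonoidAlgebra.of (ZMod p) Q g • v = v → v = 0 := by
  obtain ⟨ι, W, hsimple, -, hsup, hequiv⟩ := hiso
  have := isSemisimpleModule_of_isSemisimpleModule_submodule' (fun _ => inferInstance) hsup
  have hV : IsIsotypic _ V := isIsotypic_of_iSup_eq_top hsimple hsup hequiv
  intro g hg v hv
  by_contra hv0
  exact hg (hfaith g (hV.smul_eq_self_of_smul_eq_self hv0 hv))

theorem no_nonzero_fixed_vectors_of_faithful_isotypic (p : ℕ) [Fact p.Prime]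
    (Q : Type*) [CommGroup Q] [Finite Q]
    (V : Type*) [AddCommGroup V] [Module (ZMod p) V] [FiniteDimensional (ZMod p) V]
    [Module (MonoidAlgebra (ZMod p) Q) V]
    [IsScalarTower (ZMod p) (MonoidAlgebra (ZMod p) Q) V]
    (hfaith : ∀ g : Q, (∀ v : V, MonoidAlgebra.of (ZMod p) Q g • v = v) → g = 1)
    (hiso : ∃ (ι : Type) (W : ι → Submodule (MonoidAlgebra (ZMod p) Q) V),
      (∀ i, IsSimpleModule (MonoidAlgebra (ZMod p) Q) (W i)) ∧
      iSupIndep W ∧ (⨆ i, W i) = ⊤ ∧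
      ∀ i j, Nonempty ((W i) ≃ₗ[MonoidAlgebra (ZMod p) Q] (W j))) :
    ∀ g : Q, g ≠ 1 → ∀ v : V, MonoidAlgebra.of (ZMod p) Q g • v = v → v = 0 :=
  no_nonzero_fixed_vectors_of_faithful_isotypic_general p Q V hfaith hiso
end

section
/- Let p and q be distinct primes and let G be a finite group with subgroups P and Q such that P is a normal p-subgroup, Q is a cyclic q-subgroup, P ∩ Q = 1, PQ = G, and the centralizer C_Q(P) is a proper subgroup of Q. Then the subgroup generated by Φ(P) and C_Q(P) is contained in the Frattini subgroup Φ(G); that is, every subset of G that generates G modulo the normal subgroup Φ(P)·C_Q(P) already generates G. -/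
open Subgroup

theorem Subgroup.pow_natCard_eq_one {α : Type*} [Group α] (K : Subgroup α) {x : α}
    (hx : x ∈ K) : x ^ Nat.card K = 1 :=
  congrArg Subtype.val (pow_card_eq_one' (G := K) (x := ⟨x, hx⟩))

theorem IsCyclic.le_of_card_dvd {α : Type*} [Group α] [Finite α] [IsCyclic α]
    {H K : Subgroup α} (h : Nat.card H ∣ Nat.card K) : H ≤ K := by
  classical
  have := Fintype.ofFinite α
  have hK : {x : α | x ^ Nat.card K = 1} ⊆ K := by
    refine (Set.eq_of_subset_of_ncard_le (fun x hx => K.pow_natCard_eq_one hx) ?_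
      (Set.toFinite _)).symm.subset
    calc {x : α | x ^ Nat.card K = 1}.ncard
        = ({x : α | x ^ Nat.card K = 1} : Finset α).card := by simp [← Set.ncard_coe_finset]
      _ ≤ Nat.card K := IsCyclic.card_pow_eq_one_le Nat.card_pos
      _ = (K : Set α).ncard := (Nat.card_coe_set_eq _).symm
  intro x hx
  apply hK
  obtain ⟨k, hk⟩ := h
  change x ^ Nat.card K = 1
  rw [hk, pow_mul, H.pow_natCard_eq_one hx, one_pow]

theorem IsPGroup.le_total_of_isCyclic {α : Type*} [Group α] [Finite α] [IsCyclic α] {q : ℕ}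
    [Fact q.Prime] (hα : IsPGroup q α) (H K : Subgroup α) : H ≤ K ∨ K ≤ H := by
  obtain ⟨m, hm⟩ := (hα.to_subgroup H).exists_card_eq
  obtain ⟨n, hn⟩ := (hα.to_subgroup K).exists_card_eq
  rcases le_total m n with hmn | hnm
  · exact .inl (IsCyclic.le_of_card_dvd (hm ▸ hn ▸ pow_dvd_pow q hmn))
  · exact .inr (IsCyclic.le_of_card_dvd (hm ▸ hn ▸ pow_dvd_pow q hnm))

theorem le_frattini_of_ne_top_of_le_total {G : Type*} [Group G]
    (htot : ∀ H K : Subgroup G, H ≤ K ∨ K ≤ H) {K : Subgroup G} (hK : K ≠ ⊤) :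
    K ≤ frattini G :=
  le_iInf₂ fun M hM => (htot K M).elim id fun hMK => ((hM.le_iff.mp hMK).resolve_left hK).le

theorem le_frattini_of_le_map_frattini {G : Type*} [Group G] {H : Subgroup G}
    [IsCoatomic (Subgroup H)] {N : Subgroup G} [N.Normal]
    (hNH : N ≤ (frattini H).map H.subtype) : N ≤ frattini G := by
  refine le_iInf₂ fun M hM => ?_
  by_contra hNM
  have hNM_top : N ⊔ M = ⊤ := sup_comm M N ▸ hM.2 _ (left_lt_sup.mpr hNM)
  have hNH' : N ≤ H := hNH.trans (map_subtype_le _)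
  suffices hHM : H ≤ M from hNM (hNH'.trans hHM)
  have hsup : M.subgroupOf H ⊔ frattini H = ⊤ := by
    rw [sup_comm]
    refine eq_top_iff.mpr fun h _ => ?_
    obtain ⟨n, hn, m, hm, hnm⟩ := mem_sup_of_normal_left.mp (hNM_top ▸ mem_top (h : G))
    obtain ⟨n', hn', rfl⟩ := hNH hn
    have hm_eq : m = (n' : G)⁻¹ * h := eq_inv_mul_of_mul_eq hnm
    have hm' : n'⁻¹ * h ∈ M.subgroupOf H := by
      rwa [mem_subgroupOf, Subgroup.coe_mul, coe_inv, ← hm_eq]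
    simpa using mul_mem_sup hn' hm'
  exact subgroupOf_eq_top.mp (frattini_nongenerating hsup)

theorem Subgroup.normal_of_le_center {G : Type*} [Group G] {N : Subgroup G}
    (hN : N ≤ center G) : N.Normal :=
  ⟨fun n hn g => by rw [mem_center_iff.mp (hN hn) g, mul_inv_cancel_right]; exact hn⟩

theorem Subgroup.inf_centralizer_le_center {G : Type*} [Group G] {P Q : Subgroup G}
    [IsMulCommutative Q] (hPQ : P ⊔ Q = ⊤) : Q ⊓ centralizer (P : Set G) ≤ center G := by
  refine centralizer_eq_top_iff_subset.mp (top_le_iff.mp (hPQ ▸ sup_le ?_ ?_))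
  · exact le_centralizer_iff.mp inf_le_right
  · exact (le_centralizer Q).trans (centralizer_le inf_le_left)

open scoped Pointwise in
theorem Subgroup.sup_eq_top_of_mul_eq_univ {G : Type*} [Group G] {P Q : Subgroup G}
    (h : (P : Set G) * (Q : Set G) = Set.univ) : P ⊔ Q = ⊤ :=
  eq_top_iff.mpr fun g _ => by
    obtain ⟨x, hx, y, hy, rfl⟩ := h.symm ▸ Set.mem_univ g
    exact mul_mem_sup hx hy

open scoped Pointwise in
theorem frattiniP_mul_centralizer_le_frattini_general (q : ℕ) (hq : q.Prime)
    (G : Type*) [Group G] [Finite G] (P Q : Subgroup G) [P.Normal]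
    (hQ : IsPGroup q Q) (hQc : IsCyclic Q)
    (hprod : (P : Set G) * (Q : Set G) = Set.univ)
    (hC : Q ⊓ Subgroup.centralizer (P : Set G) < Q) :
    (frattini P).map P.subtype ⊔ (Q ⊓ Subgroup.centralizer (P : Set G)) ≤ frattini G := by
  have := Fact.mk hq
  have : (Q ⊓ centralizer (P : Set G)).Normal :=
    normal_of_le_center (inf_centralizer_le_center (sup_eq_top_of_mul_eq_univ hprod))
  have hproper : (Q ⊓ centralizer (P : Set G)).subgroupOf Q ≠ ⊤ :=
    subgroupOf_eq_top.not.mpr hC.not_ge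
  refine sup_le (le_frattini_of_le_map_frattini le_rfl)
    (le_frattini_of_le_map_frattini (H := Q) ?_)
  rw [← map_subgroupOf_eq_of_le inf_le_left]
  exact map_mono (le_frattini_of_ne_top_of_le_total hQ.le_total_of_isCyclic hproper)

open scoped Pointwise in
theorem frattiniP_mul_centralizer_le_frattini (p q : ℕ) (hp : p.Prime) (hq : q.Prime)
    (hpq : p ≠ q) (G : Type*) [Group G] [Finite G] (P Q : Subgroup G) [P.Normal]
    (hP : IsPGroup p P) (hQ : IsPGroup q Q) (hQc : IsCyclic Q)
    (hPQ : P ⊓ Q = ⊥) (hprod : (P : Set G) * (Q : Set G) = Set.univ)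
    (hC : Q ⊓ Subgroup.centralizer (P : Set G) < Q) :
    (frattini P).map P.subtype ⊔ (Q ⊓ Subgroup.centralizer (P : Set G)) ≤ frattini G :=
  frattiniP_mul_centralizer_le_frattini_general q hq G P Q hQ hQc hprod hC
end

section
/- Let p and q be distinct primes and let G be a finite group with subgroups P and Q such that P is a normal p-subgroup, Q is a cyclic q-subgroup, P ∩ Q = 1, PQ = G, and every non-trivial element of Q acts fixed-point-freely on P by conjugation. Then every subgroup H of G satisfies one of the following: (1) H is a p-group or a q-group; or (2) there exist an element x of G and subgroups R ≤ P and S ≤ Q such that x⁻¹Hx is the subgroup generated by R and S (which equals the set product RS). -/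
/-! Conjugate `H` so that one of its Sylow `q`-subgroups lies in `Q`, and call the conjugate `K`.
Since `P` is a normal Sylow subgroup, `R = P ⊓ K` is a Sylow `p`-subgroup of `K`, and by the
choice of conjugate `S = Q ⊓ K` is a Sylow `q`-subgroup of `K`. The order of `K` involves only
`p` and `q`, so these subgroups of coprime orders generate `K`, and as `K` normalises `R`,
`R ⊔ S = R * S`. -/

theorem Nat.ordProj_mul_ordProj_eq_self_of_dvd {p q a b n : ℕ} (hp : p.Prime) (hq : q.Prime)
    (hpq : p ≠ q) (hn : n ≠ 0) (hdvd : n ∣ p ^ a * q ^ b) :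
    ordProj[p] n * ordProj[q] n = n := by
  have hsupp : n.factorization.support ⊆ {p, q} := by
    intro r hr
    rw [Nat.support_factorization] at hr
    have hr' : r.Prime := Nat.prime_of_mem_primeFactors hr
    rcases hr'.dvd_mul.mp ((Nat.dvd_of_mem_primeFactors hr).trans hdvd) with h | h
    · simp [(Nat.prime_dvd_prime_iff_eq hr' hp).mp (hr'.dvd_of_dvd_pow h)]
    · simp [(Nat.prime_dvd_prime_iff_eq hr' hq).mp (hr'.dvd_of_dvd_pow h)]
  conv_rhs => rw [← Nat.prod_factorization_pow_eq_self hn]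
  rw [Finsupp.prod_of_support_subset _ hsupp (fun r k => r ^ k) (by simp), Finset.prod_pair hpq]

namespace Subgroup

variable {G : Type*} [Group G]

theorem eq_sup_of_coprime_of_card_mul_eq [Finite G] {K R S : Subgroup G} (hR : R ≤ K)
    (hS : S ≤ K) (hcop : (Nat.card R).Coprime (Nat.card S))
    (hcard : Nat.card R * Nat.card S = Nat.card K) :
    K = R ⊔ S := by
  refine (eq_of_le_of_card_ge (sup_le hR hS) ?_).symm
  rw [← hcard]
  exact Nat.le_of_dvd Nat.card_pos <|
    hcop.mul_dvd_of_dvd_of_dvd (card_dvd_of_le le_sup_left) (card_dvd_of_le le_sup_right)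

theorem IsComplement'.not_dvd_index {H K : Subgroup G} [Finite K] {p q : ℕ} [Fact q.Prime]
    (h : H.IsComplement' K) (hK : IsPGroup q K) (hp : p.Prime) (hpq : p ≠ q) :
    ¬ p ∣ H.index := by
  obtain ⟨b, hb⟩ := IsPGroup.iff_card.mp hK
  rw [h.symm.index_eq_card, hb]
  exact hp.coprime_iff_not_dvd.mp (((Nat.coprime_primes hp Fact.out).mpr hpq).pow_right b)

theorem le_normalizer_inf_of_normal (N K : Subgroup G) [N.Normal] :
    K ≤ normalizer (N ⊓ K : Subgroup G) :=
  normal_subgroupOf_iff_le_normalizer_inf.mp inferInstance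

end Subgroup

namespace Sylow

variable {G : Type*} [Group G] [Finite G] {p : ℕ} [Fact p.Prime]

theorem card_inf_of_normal (N : Sylow p G) [(N : Subgroup G).Normal] (K : Subgroup G) :
    Nat.card ↥((N : Subgroup G) ⊓ K) = ordProj[p] (Nat.card K) := by
  have hindex : ¬ p ∣ ((N : Subgroup G).subgroupOf K).index := fun h =>
    N.not_dvd_index (h.trans (Subgroup.relIndex_dvd_index_of_normal _ _))
  rw [← ((N.isPGroup'.comap_subtype (K := K)).toSylow hindex).card_eq_multiplicity]
  change _ = Nat.card ((N : Subgroup G).subgroupOf K)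
  rw [← Subgroup.inf_subgroupOf_right]
  exact (Nat.card_congr (Subgroup.subgroupOfEquivOfLe inf_le_right).toEquiv).symm

theorem exists_card_inf_map_conj (Q : Sylow p G) (H : Subgroup G) :
    ∃ x : G, Nat.card ↥((Q : Subgroup G) ⊓ H.map (MulAut.conj x⁻¹).toMonoidHom) =
      ordProj[p] (Nat.card H) := by
  obtain ⟨T⟩ : Nonempty (Sylow p H) := inferInstance
  obtain ⟨Q', hTQ'⟩ := (T.isPGroup'.map H.subtype).exists_le_sylow
  obtain ⟨x, rfl⟩ := MulAction.exists_smul_eq G Q Q'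
  refine ⟨x, ?_⟩
  set φ := (MulAut.conj x⁻¹).toMonoidHom
  have hφ : Function.Injective φ := (MulAut.conj x⁻¹).injective
  have hK : Nat.card (H.map φ) = Nat.card H := Subgroup.card_map_of_injective hφ
  apply Nat.dvd_antisymm
  · obtain ⟨k, hk⟩ := (Q.isPGroup'.to_le (inf_le_left (b := H.map φ))).exists_card_eq
    rw [hk, ← (Fact.out : p.Prime).pow_dvd_iff_dvd_ordProj Nat.card_pos.ne', ← hk, ← hK]
    exact Subgroup.card_dvd_of_le inf_le_right
  · have hle : ((T : Subgroup H).map H.subtype).map φ ≤ (Q : Subgroup G) ⊓ H.map φ := by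
      refine le_inf ?_ (Subgroup.map_mono (Subgroup.map_subtype_le _))
      rintro _ ⟨y, hy, rfl⟩
      have := hTQ' hy
      rw [Sylow.coe_subgroup_smul, Subgroup.mem_pointwise_smul_iff_inv_smul_mem] at this
      simpa [φ, MulAut.smul_def] using this
    rw [← T.card_eq_multiplicity,
      ← Subgroup.card_map_of_injective (f := H.subtype) H.subtype_injective,
      ← Subgroup.card_map_of_injective hφ]
    exact Subgroup.card_dvd_of_le hle

end Sylow

open scoped Pointwise in
theorem subgroups_of_fixed_point_free_product_general (p q : ℕ) (hp : p.Prime) (hq : q.Prime)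
    (hpq : p ≠ q) (G : Type*) [Group G] [Finite G] (P Q : Subgroup G) [P.Normal]
    (hP : IsPGroup p P) (hQ : IsPGroup q Q)
    (hPQ : P ⊓ Q = ⊥) (hprod : (P : Set G) * (Q : Set G) = Set.univ)
    (H : Subgroup G) :
    (IsPGroup p H ∨ IsPGroup q H) ∨
    (∃ x : G, ∃ R S : Subgroup G, R ≤ P ∧ S ≤ Q ∧
      Subgroup.map (MulAut.conj x⁻¹).toMonoidHom H = R ⊔ S ∧
      ((R ⊔ S : Subgroup G) : Set G) = (R : Set G) * (S : Set G)) := by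
  have : Fact p.Prime := ⟨hp⟩
  have : Fact q.Prime := ⟨hq⟩
  have hcompl : P.IsComplement' Q :=
    Subgroup.isComplement'_of_disjoint_and_mul_eq_univ (disjoint_iff.mpr hPQ) hprod
  let PS : Sylow p G := hP.toSylow (hcompl.not_dvd_index hQ hp hpq)
  let QS : Sylow q G := hQ.toSylow (hcompl.symm.not_dvd_index hP hq hpq.symm)
  have : (PS : Subgroup G).Normal := ‹P.Normal›
  obtain ⟨x, hS⟩ := QS.exists_card_inf_map_conj H
  set K := H.map (MulAut.conj x⁻¹).toMonoidHom
  have hK : Nat.card K = Nat.card H := Subgroup.card_map_of_injective (MulAut.conj x⁻¹).injective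
  have hR : Nat.card ↥(P ⊓ K) = ordProj[p] (Nat.card K) := PS.card_inf_of_normal K
  replace hS : Nat.card ↥(Q ⊓ K) = ordProj[q] (Nat.card K) := hK ▸ hS
  have hKdvd : Nat.card K ∣ Nat.card P * Nat.card Q :=
    hcompl.card_mul_card ▸ Subgroup.card_subgroup_dvd_card K
  obtain ⟨a, hPa⟩ := IsPGroup.iff_card.mp hP
  obtain ⟨b, hQb⟩ := IsPGroup.iff_card.mp hQ
  rw [hPa, hQb] at hKdvd
  have hKRS : K = (P ⊓ K) ⊔ (Q ⊓ K) := by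
    refine Subgroup.eq_sup_of_coprime_of_card_mul_eq inf_le_right inf_le_right ?_ ?_
    · rw [hR, hS]; exact Nat.coprime_pow_primes _ _ hp hq hpq
    · rw [hR, hS]; exact Nat.ordProj_mul_ordProj_eq_self_of_dvd hp hq hpq Nat.card_pos.ne' hKdvd
  refine Or.inr ⟨x, P ⊓ K, Q ⊓ K, inf_le_left, inf_le_left, hKRS, ?_⟩
  exact Subgroup.coe_mul_of_right_le_normalizer_left _ _
    (inf_le_right.trans (Subgroup.le_normalizer_inf_of_normal P K))

open scoped Pointwise in
theorem subgroups_of_fixed_point_free_product (p q : ℕ) (hp : p.Prime) (hq : q.Prime)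
    (hpq : p ≠ q) (G : Type*) [Group G] [Finite G] (P Q : Subgroup G) [P.Normal]
    (hP : IsPGroup p P) (hQ : IsPGroup q Q) (hQc : IsCyclic Q)
    (hPQ : P ⊓ Q = ⊥) (hprod : (P : Set G) * (Q : Set G) = Set.univ)
    (hfpf : ∀ y ∈ Q, y ≠ 1 → ∀ u ∈ P, y * u * y⁻¹ = u → u = 1)
    (H : Subgroup G) :
    (IsPGroup p H ∨ IsPGroup q H) ∨
    (∃ x : G, ∃ R S : Subgroup G, R ≤ P ∧ S ≤ Q ∧
      Subgroup.map (MulAut.conj x⁻¹).toMonoidHom H = R ⊔ S ∧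
      ((R ⊔ S : Subgroup G) : Set G) = (R : Set G) * (S : Set G)) :=
  subgroups_of_fixed_point_free_product_general p q hp hq hpq G P Q hP hQ hPQ hprod H
end
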